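/- Let T be a tree with weight function w and let v₀ be a vertex with w(v₀) ≥ Σ_{u ∈ N(v₀)} w(u), where N(v₀) is the set of neighbors of v₀ in T. Define w′ by w′(v₀) = Σ_{u ∈ N(v₀)} w(u) and w′(v) = w(v) for all v ≠ v₀. Then OPT(T, w′) = OPT(T, w); in particular any query to v₀ can be replaced by a sequence of queries to all neighbors of v₀, obtaining at least as much information at no greater cost. -/
import Mathlib


open scoped Classical
noncomputable section

/-- A search strategy as a decision tree: either declare (guess) that the target is `x`,
or query (ask) vertex `v` and branch on the reply, which—when the target is not `v`—is the
neighbor of `v` in the connected component of `T \ {v}` containing the target. -/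
inductive Strategy (V : Type) : Type
  | guess (x : V) : Strategy V
  | ask (v : V) (next : V → Strategy V) : Strategy V

/-- The neighbor of `v` on the unique `v`–`x` path in the tree `G` (identifying the connected
component of `G - v` containing `x`); junk value `v` when `x = v`. -/
noncomputable def stepTo {V : Type} (G : SimpleGraph V) (v x : V) : V :=
  if h : ∃ u, G.Adj v u ∧ G.dist x u < G.dist x v then h.choose else v

/-- The vertex output by a strategy when the target is `x` (querying the target reveals it). -/
noncomputable def Strategy.run {V : Type} (G : SimpleGraph V) : Strategy V → V → V
  | .guess y, _ => y
  | .ask v next, x => if x = v then v else Strategy.run G (next (stepTo G v x)) x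

/-- Total weight of the vertices queried by a strategy when the target is `x`. -/
noncomputable def Strategy.cost {V : Type} (G : SimpleGraph V) (w : V → ℝ) :
    Strategy V → V → ℝ
  | .guess _, _ => 0
  | .ask v next, x =>
      if x = v then w v else w v + Strategy.cost G w (next (stepTo G v x)) x

/-- A valid search strategy locates every target vertex. -/
def Strategy.IsValid {V : Type} (G : SimpleGraph V) (A : Strategy V) : Prop :=
  ∀ x, A.run G x = x

/-- `COST_A(T)`: worst-case total query weight of strategy `A`. -/
noncomputable def SearchCost {V : Type} (G : SimpleGraph V) (w : V → ℝ) (A : Strategy V) : ℝ :=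
  ⨆ x, A.cost G w x

/-- `OPT(T)`: the optimal worst-case search cost over all valid strategies. -/
noncomputable def OPT {V : Type} (G : SimpleGraph V) (w : V → ℝ) : ℝ :=
  sInf {c | ∃ A : Strategy V, A.IsValid G ∧ SearchCost G w A = c}


set_option linter.unusedSectionVars false

section Aux
open SimpleGraph
variable {V : Type}

lemma path_len {G : SimpleGraph V} (hG : G.IsTree) {x y : V}
    (p : G.Walk x y) (hp : p.IsPath) : p.length = G.dist x y := by
  obtain ⟨q, hq, hq'⟩ := hG.isConnected.exists_path_of_dist x y
  rw [(hG.existsUnique_path x y).unique hp hq, hq']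

/-- For adjacent `v,u`, distances to any `x` differ by exactly one. -/
lemma dist_adj_cases {G : SimpleGraph V} (hG : G.IsTree) {x u v : V} (h : G.Adj v u) :
    G.dist x u = G.dist x v + 1 ∨ G.dist x v = G.dist x u + 1 := by
  obtain ⟨p, hp⟩ := (hG.existsUnique_path x v).exists
  by_cases hu : u ∈ p.support
  · right
    have h1 := path_len hG (p.takeUntil u hu) (hp.takeUntil hu)
    have h2 := path_len hG (p.dropUntil u hu) (hp.dropUntil hu)
    have h3 : (p.takeUntil u hu).length + (p.dropUntil u hu).length = p.length := by
      rw [← Walk.length_append, p.take_spec hu]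
    have h4 : G.dist u v = 1 := dist_eq_one_iff_adj.mpr h.symm
    have h5 := path_len hG p hp
    omega
  · left
    have hq : (p.concat h).IsPath := by
      rw [← Walk.isPath_reverse_iff, Walk.reverse_concat]
      exact (p.isPath_reverse_iff.mpr hp).cons (by simpa using hu)
    have h1 := path_len hG (p.concat h) hq
    have h5 := path_len hG p hp
    rw [Walk.length_concat] at h1
    omega

/-- uniqueness of the closer neighbor in a tree -/
lemma closer_unique {G : SimpleGraph V} (hG : G.IsTree) {x v u u' : V}
    (h : G.Adj v u) (h' : G.Adj v u')
    (hd : G.dist x u < G.dist x v) (hd' : G.dist x u' < G.dist x v) : u = u' := by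
  obtain ⟨p, hp⟩ := (hG.existsUnique_path x u).exists
  obtain ⟨p', hp'⟩ := (hG.existsUnique_path x u').exists
  have hl := path_len hG p hp
  have hl' := path_len hG p' hp'
  have hdu : G.dist x v = G.dist x u + 1 := by
    rcases dist_adj_cases hG (x := x) h with h1 | h1 <;> omega
  have hdu' : G.dist x v = G.dist x u' + 1 := by
    rcases dist_adj_cases hG (x := x) h' with h1 | h1 <;> omega
  have hq : (p.concat h.symm).IsPath :=
    (p.concat h.symm).isPath_of_length_eq_dist (by rw [Walk.length_concat]; omega)
  have hq' : (p'.concat h'.symm).IsPath :=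
    (p'.concat h'.symm).isPath_of_length_eq_dist (by rw [Walk.length_concat]; omega)
  have heq : p.concat h.symm = p'.concat h'.symm :=
    (hG.existsUnique_path x v).unique hq hq'
  have heq2 : (p.concat h.symm).reverse = (p'.concat h'.symm).reverse := by rw [heq]
  rw [Walk.reverse_concat, Walk.reverse_concat] at heq2
  injection heq2

lemma exists_closer {G : SimpleGraph V} (hG : G.IsTree) {v x : V} (hxv : x ≠ v) :
    ∃ u, G.Adj v u ∧ G.dist x u < G.dist x v := by
  obtain ⟨p, hp, hl⟩ := hG.isConnected.exists_path_of_dist x v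
  obtain ⟨u, ha, q, hq⟩ := Walk.exists_eq_cons_of_ne (Ne.symm hxv) p.reverse
  refine ⟨u, ha, ?_⟩
  have h1 : G.dist x u ≤ q.reverse.length := dist_le q.reverse
  have h2 : p.reverse.length = q.length + 1 := by rw [hq]; simp
  have h3 : 0 < G.dist x v := hG.isConnected.pos_dist_of_ne hxv
  simp only [Walk.length_reverse] at h1 h2
  omega


lemma stepTo_eq {G : SimpleGraph V} (hG : G.IsTree) {v x u : V}
    (h : G.Adj v u) (hd : G.dist x u < G.dist x v) : stepTo G v x = u := by
  have hex : ∃ u, G.Adj v u ∧ G.dist x u < G.dist x v := ⟨u, h, hd⟩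
  rw [stepTo, dif_pos hex]
  exact closer_unique hG hex.choose_spec.1 h hex.choose_spec.2 hd

lemma stepTo_spec {G : SimpleGraph V} (hG : G.IsTree) {v x : V} (hxv : x ≠ v) :
    G.Adj v (stepTo G v x) ∧ G.dist x (stepTo G v x) < G.dist x v := by
  have hex := exists_closer hG hxv
  rw [stepTo, dif_pos hex]
  exact hex.choose_spec

/-- asking a neighbor of the target points at the target -/
lemma stepTo_adj {G : SimpleGraph V} (hG : G.IsTree) {u x : V} (h : G.Adj u x) :
    stepTo G u x = x :=
  stepTo_eq hG h (by
    rw [SimpleGraph.dist_self, dist_comm, dist_eq_one_iff_adj.mpr h]; omega)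

/-- a neighbor of `v₀` other than `stepTo G v₀ x` answers `v₀` -/
lemma stepTo_other {G : SimpleGraph V} (hG : G.IsTree) {v₀ u x : V} (h : G.Adj v₀ u)
    (hxv : x ≠ v₀) (hxu : x ≠ u) (hne : u ≠ stepTo G v₀ x) : stepTo G u x = v₀ := by
  apply stepTo_eq hG h.symm
  obtain ⟨ha, hd⟩ := stepTo_spec hG hxv
  have h2 : ¬ (G.dist x u < G.dist x v₀) := fun hlt => hne (closer_unique hG h ha hlt hd)
  rcases dist_adj_cases hG (x := x) h with h1 | h1 <;> omega

/-- the chosen neighbor does not answer `v₀` -/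
lemma stepTo_chosen_ne {G : SimpleGraph V} (hG : G.IsTree) {v₀ x : V}
    (hxv : x ≠ v₀) (hxu : x ≠ stepTo G v₀ x) : stepTo G (stepTo G v₀ x) x ≠ v₀ := by
  obtain ⟨ha, hd⟩ := stepTo_spec hG hxv
  obtain ⟨ha', hd'⟩ := stepTo_spec hG hxu
  intro hcontra
  rw [hcontra] at hd'
  omega


section Machinery
variable {V : Type} [Fintype V]

/-- Chain of queries to the neighbors of `v₀`, simulating a single query to `v₀`. -/
noncomputable def chain (v₀ : V) (tfn : V → Strategy V) : V → List V → Strategy V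
  | acc, [] => if acc = v₀ then Strategy.guess v₀ else tfn acc
  | acc, u :: L => Strategy.ask u (fun r => chain v₀ tfn (if r = v₀ then acc else u) L)

/-- Replace every query to `v₀` by a chain of queries to all its neighbors. -/
noncomputable def tf (G : SimpleGraph V) (v₀ : V) : Strategy V → Strategy V
  | .guess y => .guess y
  | .ask v next =>
      if v = v₀ then chain v₀ (fun r => tf G v₀ (next r)) v₀ (G.neighborFinset v₀).toList
      else .ask v (fun r => tf G v₀ (next r))

variable {G : SimpleGraph V} {v₀ : V}

lemma chain_run_v₀ (hG : G.IsTree) (tfn : V → Strategy V) :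
    ∀ L : List V, (∀ u ∈ L, G.Adj v₀ u) →
      (chain v₀ tfn v₀ L).run G v₀ = v₀ := by
  intro L
  induction L with
  | nil => intro _; simp [chain, Strategy.run]
  | cons u L ih =>
      intro hadj
      have hu : G.Adj v₀ u := hadj u (by simp)
      have hne : v₀ ≠ u := hu.ne
      have hst : stepTo G u v₀ = v₀ := stepTo_adj hG hu.symm
      simp only [chain, Strategy.run, if_neg hne, hst, if_pos rfl]
      exact ih (fun u hu => hadj u (by simp [hu]))

lemma chain_run_mem (tfn : V → Strategy V) (x : V) :
    ∀ (L : List V) (acc : V), x ∈ L → (chain v₀ tfn acc L).run G x = x := by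
  intro L
  induction L with
  | nil => intro _ h; simp at h
  | cons u L ih =>
      intro acc hmem
      by_cases hx : x = u
      · simp [chain, Strategy.run, hx]
      · have : x ∈ L := by rcases List.mem_cons.mp hmem with h | h; exact absurd h hx; exact h
        simp only [chain, Strategy.run, if_neg hx]
        exact ih _ this

lemma chain_run_key (hG : G.IsTree) (tfn : V → Strategy V) {x : V} (hxv : x ≠ v₀) :
    ∀ (L : List V) (acc : V), (∀ u ∈ L, G.Adj v₀ u) → x ∉ L →
      (stepTo G v₀ x ∈ L ∨ acc = stepTo G v₀ x) →
      (chain v₀ tfn acc L).run G x = (tfn (stepTo G v₀ x)).run G x := by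
  intro L
  induction L with
  | nil =>
      intro acc _ _ hacc
      rcases hacc with h | h
      · simp at h
      · have hne : stepTo G v₀ x ≠ v₀ := (stepTo_spec hG hxv).1.ne'
        simp [chain, h, hne]
  | cons u L ih =>
      intro acc hadj hxm hacc
      have hxu : x ≠ u := fun h => hxm (by simp [h])
      have hu : G.Adj v₀ u := hadj u (by simp)
      simp only [chain, Strategy.run, if_neg hxu]
      by_cases he : u = stepTo G v₀ x
      · have hst : stepTo G u x ≠ v₀ := by
          rw [he]; exact stepTo_chosen_ne hG hxv (he ▸ hxu)
        rw [if_neg hst]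
        exact ih _ (fun u hu => hadj u (by simp [hu])) (fun h => hxm (by simp [h])) (Or.inr he)
      · have hst : stepTo G u x = v₀ := stepTo_other hG hu hxv hxu he
        rw [hst, if_pos rfl]
        refine ih _ (fun u hu => hadj u (by simp [hu])) (fun h => hxm (by simp [h])) ?_
        rcases hacc with h | h
        · rcases List.mem_cons.mp h with h' | h'
          · exact absurd h'.symm he
          · exact Or.inl h'
        · exact Or.inr h

lemma tf_run (hG : G.IsTree) :
    ∀ (A : Strategy V) (x : V), A.run G x = x → (tf G v₀ A).run G x = x := by
  intro A
  induction A with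
  | guess y => intro x h; exact h
  | ask v next ih =>
      intro x h
      by_cases hv : v = v₀
      · subst hv
        simp only [tf]
        rw [if_pos trivial]
        by_cases hxv : x = v
        · subst hxv
          exact chain_run_v₀ hG _ _ (fun u hu => by
            simpa using (Finset.mem_toList.mp hu))
        · by_cases hxm : x ∈ (G.neighborFinset v).toList
          · exact chain_run_mem _ _ _ _ hxm
          · have hmem : stepTo G v x ∈ (G.neighborFinset v).toList := by
              rw [Finset.mem_toList, SimpleGraph.mem_neighborFinset]
              exact (stepTo_spec hG hxv).1
            rw [chain_run_key hG _ hxv _ _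
              (fun u hu => by simpa using (Finset.mem_toList.mp hu)) hxm (Or.inl hmem)]
            apply ih
            simpa [Strategy.run, hxv] using h
      · simp only [tf, if_neg hv, Strategy.run]
        by_cases hxv : x = v
        · simp [hxv]
        · rw [if_neg hxv]
          apply ih
          simpa [Strategy.run, hxv] using h
variable {w : V → ℝ}

lemma cost_nonneg (hw0 : ∀ v, 0 ≤ w v) : ∀ (A : Strategy V) (x : V), 0 ≤ A.cost G w x := by
  intro A
  induction A with
  | guess y => intro x; simp [Strategy.cost]
  | ask v next ih =>
      intro x
      simp only [Strategy.cost]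
      by_cases hx : x = v
      · rw [if_pos hx]; exact hw0 v
      · rw [if_neg hx]; exact add_nonneg (hw0 v) (ih _ _)

lemma cost_mono {w₁ w₂ : V → ℝ} (h : ∀ v, w₁ v ≤ w₂ v) :
    ∀ (A : Strategy V) (x : V), A.cost G w₁ x ≤ A.cost G w₂ x := by
  intro A
  induction A with
  | guess y => intro x; simp [Strategy.cost]
  | ask v next ih =>
      intro x
      by_cases hx : x = v
      · simpa [Strategy.cost, hx] using h v
      · simp only [Strategy.cost, if_neg hx]
        exact add_le_add (h v) (ih _ _)

lemma chain_cost_v₀ (hG : G.IsTree) (tfn : V → Strategy V) :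
    ∀ L : List V, (∀ u ∈ L, G.Adj v₀ u) →
      (chain v₀ tfn v₀ L).cost G w v₀ = (L.map w).sum := by
  intro L
  induction L with
  | nil => intro _; simp [chain, Strategy.cost]
  | cons u L ih =>
      intro hadj
      have hu : G.Adj v₀ u := hadj u (by simp)
      have hne : v₀ ≠ u := hu.ne
      have hst : stepTo G u v₀ = v₀ := stepTo_adj hG hu.symm
      simp only [chain, Strategy.cost, if_neg hne, hst, List.map_cons, List.sum_cons]
      rw [if_pos trivial, ih (fun u hu => hadj u (by simp [hu]))]

lemma chain_cost_mem (hw0 : ∀ v, 0 ≤ w v) (tfn : V → Strategy V) (x : V) :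
    ∀ (L : List V) (acc : V), x ∈ L →
      (chain v₀ tfn acc L).cost G w x ≤ (L.map w).sum := by
  intro L
  induction L with
  | nil => intro _ h; simp at h
  | cons u L ih =>
      intro acc hmem
      simp only [List.map_cons, List.sum_cons]
      by_cases hx : x = u
      · simp only [chain, Strategy.cost, hx]
        rw [if_pos trivial]
        have : 0 ≤ (L.map w).sum := List.sum_nonneg (by
          intro a ha; obtain ⟨b, _, rfl⟩ := List.mem_map.mp ha; exact hw0 b)
        linarith
      · have : x ∈ L := by rcases List.mem_cons.mp hmem with h | h; exact absurd h hx; exact h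
        simp only [chain, Strategy.cost, if_neg hx]
        exact add_le_add le_rfl (ih _ this)

lemma chain_cost_key (hG : G.IsTree) (tfn : V → Strategy V) {x : V} (hxv : x ≠ v₀) :
    ∀ (L : List V) (acc : V), (∀ u ∈ L, G.Adj v₀ u) → x ∉ L →
      (stepTo G v₀ x ∈ L ∨ acc = stepTo G v₀ x) →
      (chain v₀ tfn acc L).cost G w x
        = (L.map w).sum + (tfn (stepTo G v₀ x)).cost G w x := by
  intro L
  induction L with
  | nil =>
      intro acc _ _ hacc
      rcases hacc with h | h
      · simp at h
      · have hne : stepTo G v₀ x ≠ v₀ := (stepTo_spec hG hxv).1.ne'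
        simp [chain, h, hne, Strategy.cost]
  | cons u L ih =>
      intro acc hadj hxm hacc
      have hxu : x ≠ u := fun h => hxm (by simp [h])
      have hu : G.Adj v₀ u := hadj u (by simp)
      simp only [chain, Strategy.cost, if_neg hxu, List.map_cons, List.sum_cons]
      by_cases he : u = stepTo G v₀ x
      · have hst : stepTo G u x ≠ v₀ := by
          rw [he]; exact stepTo_chosen_ne hG hxv (he ▸ hxu)
        rw [if_neg hst,
          ih _ (fun u hu => hadj u (by simp [hu])) (fun h => hxm (by simp [h])) (Or.inr he),
          add_assoc]
      · have hst : stepTo G u x = v₀ := stepTo_other hG hu hxv hxu he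
        rw [hst, if_pos rfl]
        rw [ih _ (fun u hu => hadj u (by simp [hu])) (fun h => hxm (by simp [h])) ?_, add_assoc]
        rcases hacc with h | h
        · rcases List.mem_cons.mp h with h' | h'
          · exact absurd h'.symm he
          · exact Or.inl h'
        · exact Or.inr h

lemma neighbor_sum_eq :
    (((G.neighborFinset v₀).toList).map w).sum = ∑ u ∈ G.neighborFinset v₀, w u := by
  rw [← List.sum_toFinset _ (Finset.nodup_toList _), Finset.toList_toFinset]

lemma tf_cost (hG : G.IsTree) (hw0 : ∀ v, 0 ≤ w v) :
    ∀ (A : Strategy V) (x : V),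
      (tf G v₀ A).cost G w x
        ≤ A.cost G (Function.update w v₀ (∑ u ∈ G.neighborFinset v₀, w u)) x := by
  set w' := Function.update w v₀ (∑ u ∈ G.neighborFinset v₀, w u) with hw'
  have hw'0 : ∀ v, 0 ≤ w' v := by
    intro v
    by_cases hv : v = v₀
    · subst hv; rw [hw', Function.update_self]
      exact Finset.sum_nonneg fun u _ => hw0 u
    · rw [hw', Function.update_of_ne hv]; exact hw0 v
  have hSv : w' v₀ = ∑ u ∈ G.neighborFinset v₀, w u := Function.update_self _ _ _
  intro A
  induction A with
  | guess y => intro x; simp [Strategy.cost, tf]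
  | ask v next ih =>
      intro x
      by_cases hv : v = v₀
      · subst hv
        simp only [tf]
        rw [if_pos trivial]
        have hadj : ∀ u ∈ (G.neighborFinset v).toList, G.Adj v u := fun u hu => by
          simpa using (Finset.mem_toList.mp hu)
        by_cases hxv : x = v
        · subst hxv
          rw [chain_cost_v₀ hG _ _ hadj, neighbor_sum_eq]
          simp [Strategy.cost, hSv]
        · simp only [Strategy.cost, if_neg hxv]
          by_cases hxm : x ∈ (G.neighborFinset v).toList
          · calc (chain v _ v _).cost G w x ≤ _ := chain_cost_mem hw0 _ _ _ _ hxm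
              _ = w' v := by rw [neighbor_sum_eq, hSv]
              _ ≤ _ := le_add_of_nonneg_right (cost_nonneg hw'0 _ _)
          · have hmem : stepTo G v x ∈ (G.neighborFinset v).toList := by
              rw [Finset.mem_toList, SimpleGraph.mem_neighborFinset]
              exact (stepTo_spec hG hxv).1
            rw [chain_cost_key hG _ hxv _ _ hadj hxm (Or.inl hmem), neighbor_sum_eq, ← hSv]
            exact add_le_add le_rfl (ih _ _)
      · simp only [tf, if_neg hv, Strategy.cost]
        have hwv : w v = w' v := (Function.update_of_ne hv _ _).symm
        by_cases hxv : x = v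
        · simp [hxv, hwv]
        · rw [if_neg hxv, if_neg hxv, hwv]
          exact add_le_add le_rfl (ih _ _)

end Machinery

section Final
open SimpleGraph
variable {V : Type} [Fintype V] {G : SimpleGraph V}

/-- the trivial strategy that queries all given vertices in order -/
noncomputable def askAll (d : V) : List V → Strategy V
  | [] => Strategy.guess d
  | v :: L => Strategy.ask v (fun _ => askAll d L)

lemma askAll_run (d : V) : ∀ (L : List V) (x : V), x ∈ L → (askAll d L).run G x = x := by
  intro L
  induction L with
  | nil => intro x h; simp at h
  | cons v L ih =>
      intro x hmem
      by_cases hx : x = v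
      · simp [askAll, Strategy.run, hx]
      · have : x ∈ L := by rcases List.mem_cons.mp hmem with h | h; exact absurd h hx; exact h
        simp only [askAll, Strategy.run, if_neg hx]
        exact ih x this

lemma SearchCost_nonneg [Nonempty V] {w : V → ℝ} (hw0 : ∀ v, 0 ≤ w v) (A : Strategy V) :
    0 ≤ SearchCost G w A := by
  obtain ⟨x⟩ := ‹Nonempty V›
  exact le_trans (cost_nonneg hw0 A x)
    (le_ciSup (Set.Finite.bddAbove (Set.finite_range _)) x)

lemma SearchCost_mono {w₁ w₂ : V → ℝ} {A B : Strategy V}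
    (h : ∀ x, A.cost G w₁ x ≤ B.cost G w₂ x) :
    SearchCost G w₁ A ≤ SearchCost G w₂ B := by
  rcases isEmpty_or_nonempty V with hV | hV
  · simp [SearchCost, ciSup_of_empty]
  · exact ciSup_mono (Set.Finite.bddAbove (Set.finite_range _)) h


end Final
end Aux

/-- If `w(v₀) ≥ Σ_{u ∈ N(v₀)} w(u)`, then lowering the weight of `v₀` to
`Σ_{u ∈ N(v₀)} w(u)` does not change the optimal worst-case search cost. -/
theorem stmt4 {V : Type} [Fintype V] (G : SimpleGraph V) (hG : G.IsTree)
    (w : V → ℝ) (hw0 : ∀ v, 0 ≤ w v) (v₀ : V)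
    (hv₀ : ∑ u ∈ G.neighborFinset v₀, w u ≤ w v₀) :
    OPT G (Function.update w v₀ (∑ u ∈ G.neighborFinset v₀, w u)) = OPT G w := by
  have hNe : Nonempty V := hG.isConnected.nonempty
  set w' := Function.update w v₀ (∑ u ∈ G.neighborFinset v₀, w u) with hw'def
  have hw'0 : ∀ v, 0 ≤ w' v := by
    intro v
    by_cases hv : v = v₀
    · subst hv; rw [hw'def, Function.update_self]
      exact Finset.sum_nonneg fun u _ => hw0 u
    · rw [hw'def, Function.update_of_ne hv]; exact hw0 v
  have hle : ∀ v, w' v ≤ w v := by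
    intro v
    by_cases hv : v = v₀
    · subst hv; rw [hw'def, Function.update_self]; exact hv₀
    · rw [hw'def, Function.update_of_ne hv]
  -- the trivial valid strategy
  have hA0 : ∃ A : Strategy V, Strategy.IsValid G A := by
    refine ⟨askAll (Classical.arbitrary V) (Finset.univ : Finset V).toList, fun x => ?_⟩
    exact askAll_run _ _ x (by simp [Finset.mem_toList])
  obtain ⟨A₀, hA₀⟩ := hA0
  have hne : ∀ u : V → ℝ, {c | ∃ A : Strategy V, A.IsValid G ∧ SearchCost G u A = c}.Nonempty :=
    fun u => ⟨SearchCost G u A₀, A₀, hA₀, rfl⟩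
  have hbdd : ∀ u : V → ℝ, (∀ v, 0 ≤ u v) →
      BddBelow {c | ∃ A : Strategy V, A.IsValid G ∧ SearchCost G u A = c} := by
    intro u hu
    refine ⟨0, fun c hc => ?_⟩
    obtain ⟨A, _, rfl⟩ := hc
    exact SearchCost_nonneg hu A
  apply le_antisymm
  · -- OPT w' ≤ OPT w
    apply le_csInf (hne w)
    rintro c ⟨A, hA, rfl⟩
    exact csInf_le_of_le (hbdd w' hw'0) ⟨A, hA, rfl⟩
      (SearchCost_mono fun x => cost_mono hle A x)
  · -- OPT w ≤ OPT w'
    apply le_csInf (hne w')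
    rintro c ⟨A, hA, rfl⟩
    refine csInf_le_of_le (hbdd w hw0) ⟨tf G v₀ A, fun x => tf_run hG A x (hA x), rfl⟩ ?_
    exact SearchCost_mono fun x => tf_cost hG hw0 A x
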